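/- arXiv:2111.01564 — 2 statements merged into one kernel-verified Lean document; each statement's English description precedes it below -/
import Mathlib

section
/- Let g(z) = log(1 + exp(z)) be the Softplus function and let a < b be reals. With k(a,b) = log(exp(b-a) - 1), the map x ↦ -g(-g(x) + k(a,b)) + b sends every real x into the open interval (a, b). -/
/-- Softplus interval constraint: `x ↦ -g(-g(x) + k(a,b)) + b` maps ℝ into `(a, b)`. -/
theorem softplus_interval_constraint (a b : ℝ) (hab : a < b)
    (g : ℝ → ℝ) (hg : ∀ z, g z = Real.log (1 + Real.exp z))
    (k : ℝ) (hk : k = Real.log (Real.exp (b - a) - 1)) :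
    ∀ x : ℝ, (-g (-g x + k) + b) ∈ Set.Ioo a b := by
  have gpos : ∀ z, 0 < g z := by
    intro z
    rw [hg]
    exact Real.log_pos (by linarith [Real.exp_pos z])
  have h1 : (1 : ℝ) < Real.exp (b - a) := by
    have := Real.add_one_lt_exp (x := b - a) (by linarith)
    linarith
  have hek : Real.exp k = Real.exp (b - a) - 1 := by
    rw [hk, Real.exp_log (by linarith)]
  intro x
  constructor
  · -- a < -g(-g x + k) + b, i.e. g(-g x + k) < b - a
    have hlt : g (-g x + k) < b - a := by
      rw [hg]
      have hex : Real.exp (-g x + k) = Real.exp (-g x) * (Real.exp (b - a) - 1) := by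
        rw [Real.exp_add, hek]
      have hlt1 : Real.exp (-g x) < 1 := Real.exp_lt_one_iff.mpr (by linarith [gpos x])
      have hpos : 0 < Real.exp (b - a) - 1 := by linarith
      have : 1 + Real.exp (-g x + k) < Real.exp (b - a) := by
        rw [hex]
        nlinarith [Real.exp_pos (-g x)]
      calc Real.log (1 + Real.exp (-g x + k)) < Real.log (Real.exp (b - a)) :=
            Real.log_lt_log (by positivity) this
        _ = b - a := Real.log_exp _
    linarith
  · linarith [gpos (-g x + k)]
end

section
/- Let a < b be reals and g(z) = log(1 + exp(z)), k(a,b) = log(exp(b−a) − 1). The map T(x) = −g(−g(x) + k(a,b)) + b is a bijection from ℝ onto the open interval (a, b). -/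
/-- The interval-constraint transformation `T` is a bijection from ℝ onto `(a, b)`. -/
theorem interval_transform_bijOn (a b : ℝ) (hab : a < b)
    (g : ℝ → ℝ) (hg : ∀ z, g z = Real.log (1 + Real.exp z))
    (k : ℝ) (hk : k = Real.log (Real.exp (b - a) - 1))
    (T : ℝ → ℝ) (hT : ∀ x, T x = -g (-g x + k) + b) :
    Set.BijOn T Set.univ (Set.Ioo a b) := by
  have hone : ∀ v : ℝ, 0 < v → (1 : ℝ) < Real.exp v := by
    intro v hv
    rw [← Real.exp_zero]
    exact Real.exp_lt_exp.2 hv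
  have hgpos : ∀ z, 0 < g z := by
    intro z
    rw [hg]
    exact Real.log_pos (by linarith [Real.exp_pos z])
  have hgmono : StrictMono g := by
    intro x y hxy
    rw [hg, hg]
    exact Real.log_lt_log (by positivity) (by linarith [Real.exp_lt_exp.2 hxy])
  have hginv : ∀ v : ℝ, 0 < v → g (Real.log (Real.exp v - 1)) = v := by
    intro v hv
    have h1 : (0 : ℝ) < Real.exp v - 1 := by linarith [hone v hv]
    rw [hg, Real.exp_log h1]
    simp [Real.log_exp]
  have hgk : g k = b - a := by rw [hk]; exact hginv (b - a) (by linarith)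
  have hmaps : Set.MapsTo T Set.univ (Set.Ioo a b) := by
    intro x _
    have h1 : 0 < g (-g x + k) := hgpos _
    have h2 : g (-g x + k) < b - a := by
      have := hgmono (show -g x + k < k by linarith [hgpos x])
      rwa [hgk] at this
    rw [hT]
    constructor <;> simp <;> linarith
  refine ⟨hmaps, ?_, ?_⟩
  · have hTmono : StrictMono T := by
      intro x y hxy
      have h1 : g x < g y := hgmono hxy
      have h2 : g (-g y + k) < g (-g x + k) := hgmono (by linarith)
      rw [hT, hT]
      linarith
    exact fun x _ y _ h => hTmono.injective h
  · intro y hy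
    obtain ⟨hya, hyb⟩ := hy
    have hby : 0 < b - y := by linarith
    have hlt : Real.log (Real.exp (b - y) - 1) < k := by
      rw [hk]
      apply Real.log_lt_log (by linarith [hone (b - y) hby])
      have := Real.exp_lt_exp.2 (show b - y < b - a by linarith)
      linarith
    set w : ℝ := k - Real.log (Real.exp (b - y) - 1) with hw
    have hwpos : 0 < w := by linarith
    refine ⟨Real.log (Real.exp w - 1), trivial, ?_⟩
    rw [hT, hginv w hwpos]
    have : -w + k = Real.log (Real.exp (b - y) - 1) := by rw [hw]; ring
    rw [this, hginv (b - y) hby]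
    ring
end
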